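/- arXiv:1303.2897 — 2 statements merged into one kernel-verified Lean document; each statement's English description precedes it below -/
import Mathlib

section
/- The function v(x) = x_1^2/(2(1+x_n)) + (1/2)(x_2^2 + ... + x_{n-1}^2) + x_n^{2+α}/((1+α)(2+α)) + x_n^{3+α}/((2+α)(3+α)) on the upper half-space {x_n > 0} satisfies det D²v = x_n^α and v(x',0) = (1/2)|x'|^2. -/
noncomputable def pderiv' {n : ℕ} (i : Fin n) (u : (Fin n → ℝ) → ℝ) (x : Fin n → ℝ) : ℝ :=
  fderiv ℝ u x (Pi.single i 1)

noncomputable def hess {n : ℕ} (u : (Fin n → ℝ) → ℝ) (x : Fin n → ℝ) :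
    Matrix (Fin n) (Fin n) ℝ :=
  Matrix.of fun i j => pderiv' j (pderiv' i u) x

/-!
Write `v(x) = x₁² a(xₙ) + ½(x₂² + ⋯ + xₙ₋₁²) + G(xₙ)` with `a(t) = 1/(2(1+t))`. Away from the
coordinates `x₁, xₙ` the Hessian is the identity, so `det D²v = 2a (x₁² a'' + G'') - (2x₁ a')²`.
The `x₁²` terms cancel because `1/a` is affine (`a a'' = 2a'²`), leaving
`2a G'' = (tᵅ + t^{1+α}) / (1 + t) = tᵅ` at `t = xₙ`.
-/

open Finset Filter Topology

theorem Matrix.det_eq_of_row_eq_single_of_ne {ι R : Type*} [Fintype ι] [DecidableEq ι]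
    [CommRing R] (M : Matrix ι ι R) {a b : ι} (hab : a ≠ b)
    (hM : ∀ i, i ≠ a → i ≠ b → M i = Pi.single i 1) :
    M.det = M a a * M b b - M a b * M b a := by
  -- `M - 1 = A * B` factors through `R²`, and `det (1 + A * B) = det (1 + B * A)` is `2 × 2`.
  set f : Fin 2 → ι := ![a, b]
  set A : Matrix ι (Fin 2) R := (1 : Matrix ι ι R).submatrix id f
  set B : Matrix (Fin 2) ι R := (M - 1).submatrix f id
  have hAB : 1 + A * B = M := by
    ext i j
    rw [Matrix.add_apply, Matrix.mul_apply, Fin.sum_univ_two]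
    change (1 : Matrix ι ι R) i j + ((1 : Matrix ι ι R) i a * (M - 1) a j +
      (1 : Matrix ι ι R) i b * (M - 1) b j) = M i j
    simp only [Matrix.sub_apply]
    by_cases hia : i = a
    · subst hia
      rw [Matrix.one_apply_eq, Matrix.one_apply_ne hab]
      ring
    by_cases hib : i = b
    · subst hib
      rw [Matrix.one_apply_eq, Matrix.one_apply_ne hab.symm]
      ring
    rw [Matrix.one_apply_ne hia, Matrix.one_apply_ne hib, hM i hia hib, Matrix.one_eq_pi_single]
    ring
  have hBA : 1 + B * A = M.submatrix f f := by
    rw [← Matrix.submatrix_mul _ _ _ _ _ Function.bijective_id, Matrix.mul_one]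
    have hf : Function.Injective f := by
      intro k l; fin_cases k <;> fin_cases l <;> simp [f, hab, hab.symm]
    ext k l
    simp [Matrix.one_apply, hf.eq_iff]
  calc M.det = (1 + A * B).det := by rw [hAB]
    _ = (M.submatrix f f).det := by rw [Matrix.det_one_add_mul_comm, hBA]
    _ = M a a * M b b - M a b * M b a := by
      rw [Matrix.det_fin_two]; rfl

section PartialDerivatives

variable {n : ℕ} {u g : (Fin n → ℝ) → ℝ} {D : (Fin n → ℝ) →L[ℝ] ℝ} {x : Fin n → ℝ}

theorem pderiv'_eq_of_hasFDerivAt (h : HasFDerivAt u D x) (i : Fin n) :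
    pderiv' i u x = D (Pi.single i 1) := by
  rw [pderiv', h.fderiv]

theorem hess_apply_eq_of_eventuallyEq {i : Fin n} (hg : pderiv' i u =ᶠ[𝓝 x] g)
    (h : HasFDerivAt g D x) (j : Fin n) : hess u x i j = D (Pi.single j 1) := by
  rw [hess, Matrix.of_apply, pderiv', hg.fderiv_eq, h.fderiv]

end PartialDerivatives

noncomputable def warpedQuadratic {n : ℕ} (z m : Fin n) (a G : ℝ → ℝ) (y : Fin n → ℝ) : ℝ :=
  y z ^ 2 * a (y m) + 1 / 2 * ∑ i ∈ {z, m}ᶜ, y i ^ 2 + G (y m)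

theorem warpedQuadratic_of_apply_eq_zero {n : ℕ} {z m : Fin n} {a G : ℝ → ℝ} {x : Fin n → ℝ}
    (hzm : z ≠ m) (ha : a 0 = 1 / 2) (hG : G 0 = 0) (hx : x m = 0) :
    warpedQuadratic z m a G x = 1 / 2 * ∑ i ∈ {m}ᶜ, x i ^ 2 := by
  have hm := sum_compl_add_sum {m} fun i => x i ^ 2
  have hzm' := sum_compl_add_sum {z, m} fun i => x i ^ 2
  rw [sum_singleton] at hm
  rw [sum_pair hzm] at hzm'
  rw [warpedQuadratic, hx, ha, hG]
  linear_combination (1 / 2 : ℝ) * (hzm' - hm)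

section WarpedQuadratic

variable {n : ℕ} {z m : Fin n} {a G a' G' : ℝ → ℝ} {a'' G'' : ℝ} {x : Fin n → ℝ}

theorem pderiv'_warpedQuadratic (hzm : z ≠ m) (ha : HasDerivAt a (a' (x m)) (x m))
    (hG : HasDerivAt G (G' (x m)) (x m)) (i : Fin n) :
    pderiv' i (warpedQuadratic z m a G) x =
      if i = z then 2 * x z * a (x m)
      else if i = m then x z ^ 2 * a' (x m) + G' (x m) else x i := by
  have hm := hasFDerivAt_apply (𝕜 := ℝ) m x
  have hS := HasFDerivAt.fun_sum (u := ({z, m}ᶜ : Finset (Fin n)))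
    fun i _ => (hasFDerivAt_apply (𝕜 := ℝ) i x).pow 2
  have hD := ((((hasFDerivAt_apply (𝕜 := ℝ) z x).pow 2).mul (ha.comp_hasFDerivAt x hm)).add
    (hS.const_mul (1 / 2))).add (hG.comp_hasFDerivAt x hm)
  rw [pderiv'_eq_of_hasFDerivAt (u := warpedQuadratic z m a G) hD]
  by_cases hiz : i = z
  · subst hiz
    simp [Pi.single_apply, hzm.symm, mul_comm, mul_left_comm]
  by_cases him : i = m
  · subst him
    simp [Pi.single_apply, hzm, hiz]
  · simp [Pi.single_apply, hiz, him, Ne.symm hiz, Ne.symm him]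

variable (ha : ∀ᶠ t in 𝓝 (x m), HasDerivAt a (a' t) t)
  (hG : ∀ᶠ t in 𝓝 (x m), HasDerivAt G (G' t) t)
include ha hG

theorem eventuallyEq_pderiv'_warpedQuadratic (hzm : z ≠ m) (i : Fin n) :
    pderiv' i (warpedQuadratic z m a G) =ᶠ[𝓝 x] fun y =>
      if i = z then 2 * y z * a (y m)
      else if i = m then y z ^ 2 * a' (y m) + G' (y m) else y i := by
  have hm : Tendsto (fun y : Fin n → ℝ => y m) (𝓝 x) (𝓝 (x m)) := (continuous_apply m).tendsto x
  filter_upwards [hm.eventually ha, hm.eventually hG] with y hay hGy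
  exact pderiv'_warpedQuadratic hzm hay hGy i

theorem hess_warpedQuadratic_row_z (hzm : z ≠ m) :
    hess (warpedQuadratic z m a G) x z =
      (2 * a (x m)) • Pi.single z 1 + (2 * x z * a' (x m)) • Pi.single m 1 := by
  have hg : pderiv' z (warpedQuadratic z m a G) =ᶠ[𝓝 x] fun y => 2 * y z * a (y m) := by
    filter_upwards [eventuallyEq_pderiv'_warpedQuadratic ha hG hzm z] with y hy
    rw [hy, if_pos rfl]
  have hD := ((hasFDerivAt_apply (𝕜 := ℝ) z x).const_mul 2).mul
    (ha.self_of_nhds.comp_hasFDerivAt x (hasFDerivAt_apply (𝕜 := ℝ) m x))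
  funext j
  rw [hess_apply_eq_of_eventuallyEq hg hD]
  simp [Pi.single_apply, @eq_comm _ j, mul_comm, add_comm]

theorem hess_warpedQuadratic_row_m (hzm : z ≠ m) (ha' : HasDerivAt a' a'' (x m))
    (hG' : HasDerivAt G' G'' (x m)) :
    hess (warpedQuadratic z m a G) x m =
      (2 * x z * a' (x m)) • Pi.single z 1 + (x z ^ 2 * a'' + G'') • Pi.single m 1 := by
  have hg : pderiv' m (warpedQuadratic z m a G) =ᶠ[𝓝 x]
      fun y => y z ^ 2 * a' (y m) + G' (y m) := by
    filter_upwards [eventuallyEq_pderiv'_warpedQuadratic ha hG hzm m] with y hy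
    rw [hy, if_neg hzm.symm, if_pos rfl]
  have hm := hasFDerivAt_apply (𝕜 := ℝ) m x
  have hD := (((hasFDerivAt_apply (𝕜 := ℝ) z x).pow 2).mul (ha'.comp_hasFDerivAt x hm)).add
    (hG'.comp_hasFDerivAt x hm)
  funext j
  rw [hess_apply_eq_of_eventuallyEq hg hD]
  simp only [Function.comp_apply, Nat.add_one_sub_one, pow_one, nsmul_eq_mul, Nat.cast_ofNat,
    add_apply, smul_apply, ContinuousLinearMap.proj_apply, Pi.single_apply, smul_eq_mul, mul_ite,
    mul_one, mul_zero, Pi.add_apply, Pi.smul_apply, @eq_comm _ j]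
  split_ifs <;> ring

theorem hess_warpedQuadratic_row_of_ne (hzm : z ≠ m) {i : Fin n} (hiz : i ≠ z) (him : i ≠ m) :
    hess (warpedQuadratic z m a G) x i = Pi.single i 1 := by
  have hg : pderiv' i (warpedQuadratic z m a G) =ᶠ[𝓝 x] fun y => y i := by
    filter_upwards [eventuallyEq_pderiv'_warpedQuadratic ha hG hzm i] with y hy
    rw [hy, if_neg hiz, if_neg him]
  funext j
  rw [hess_apply_eq_of_eventuallyEq hg (hasFDerivAt_apply (𝕜 := ℝ) i x)]
  simp [Pi.single_apply, @eq_comm _ j]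

theorem det_hess_warpedQuadratic (hzm : z ≠ m) (ha' : HasDerivAt a' a'' (x m))
    (hG' : HasDerivAt G' G'' (x m)) :
    (hess (warpedQuadratic z m a G) x).det =
      2 * a (x m) * (x z ^ 2 * a'' + G'') - (2 * x z * a' (x m)) ^ 2 := by
  rw [Matrix.det_eq_of_row_eq_single_of_ne _ hzm fun i hiz him =>
      hess_warpedQuadratic_row_of_ne ha hG hzm hiz him,
    hess_warpedQuadratic_row_z ha hG hzm, hess_warpedQuadratic_row_m ha hG hzm ha' hG']
  simp only [Pi.add_apply, Pi.smul_apply, Pi.single_eq_same, Pi.single_eq_of_ne hzm,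
    Pi.single_eq_of_ne hzm.symm, smul_eq_mul, mul_one, mul_zero, add_zero, zero_add]
  ring

end WarpedQuadratic

section Profiles

variable {α t : ℝ}

theorem hasDerivAt_inv_two_mul_one_add (ht : 1 + t ≠ 0) :
    HasDerivAt (fun s => (2 * (1 + s))⁻¹) (-(2 * (1 + t) ^ 2)⁻¹) t := by
  have h := (((hasDerivAt_id t).const_add 1).const_mul 2).inv (mul_ne_zero two_ne_zero ht)
  refine h.congr_deriv ?_
  simp only [id_eq]
  field_simp

theorem hasDerivAt_neg_inv_two_mul_one_add_sq (ht : 1 + t ≠ 0) :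
    HasDerivAt (fun s => -(2 * (1 + s) ^ 2)⁻¹) ((1 + t) ^ 3)⁻¹ t := by
  have h := ((((hasDerivAt_id t).const_add 1).pow 2).const_mul 2).inv (by simp [ht])
  refine h.neg.congr_deriv ?_
  simp only [id_eq, Pi.pow_apply]
  field_simp
  ring

noncomputable def verticalProfile (α t : ℝ) : ℝ :=
  t ^ (2 + α) / ((1 + α) * (2 + α)) + t ^ (3 + α) / ((2 + α) * (3 + α))

theorem verticalProfile_zero (hα : -1 < α) : verticalProfile α 0 = 0 := by
  rw [verticalProfile, Real.zero_rpow (by linarith), Real.zero_rpow (by linarith)]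
  ring

theorem hasDerivAt_verticalProfile (hα : -1 < α) (ht : 0 < t) :
    HasDerivAt (verticalProfile α) (t ^ (1 + α) / (1 + α) + t ^ (2 + α) / (2 + α)) t := by
  have h := ((Real.hasDerivAt_rpow_const (p := 2 + α) (Or.inl ht.ne')).div_const
    ((1 + α) * (2 + α))).add ((Real.hasDerivAt_rpow_const (p := 3 + α) (Or.inl ht.ne')).div_const
    ((2 + α) * (3 + α)))
  refine h.congr_deriv ?_
  rw [show 2 + α - 1 = 1 + α by ring, show 3 + α - 1 = 2 + α by ring]
  field_simp [show 1 + α ≠ 0 by linarith, show 2 + α ≠ 0 by linarith, show 3 + α ≠ 0 by linarith]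

theorem hasDerivAt_verticalProfile_deriv (hα : -1 < α) (ht : 0 < t) :
    HasDerivAt (fun s => s ^ (1 + α) / (1 + α) + s ^ (2 + α) / (2 + α))
      (t ^ α + t ^ (1 + α)) t := by
  have h := ((Real.hasDerivAt_rpow_const (p := 1 + α) (Or.inl ht.ne')).div_const
    (1 + α)).add ((Real.hasDerivAt_rpow_const (p := 2 + α) (Or.inl ht.ne')).div_const (2 + α))
  refine h.congr_deriv ?_
  rw [show 1 + α - 1 = α by ring, show 2 + α - 1 = 1 + α by ring]
  field_simp [show 1 + α ≠ 0 by linarith, show 2 + α ≠ 0 by linarith]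

end Profiles

/-- the function
`v(x) = x₁²/(2(1+xₙ)) + ½(x₂²+⋯+x_{n-1}²) + xₙ^{2+α}/((1+α)(2+α)) + xₙ^{3+α}/((2+α)(3+α))`
on the upper half-space `{xₙ > 0}` satisfies `det D²v = xₙ^α` and `v(x',0) = ½|x'|²`. -/
theorem stmt1 (n : ℕ) (hn : 2 ≤ n) (α : ℝ) (hα : 0 < α)
    (v : (Fin n → ℝ) → ℝ)
    (hv : v = fun x =>
      (x ⟨0, by omega⟩) ^ 2 / (2 * (1 + x ⟨n - 1, by omega⟩)) +
      (1 / 2) * ∑ i : Fin n, (if i.val ≠ 0 ∧ i.val ≠ n - 1 then (x i) ^ 2 else 0) +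
      (x ⟨n - 1, by omega⟩) ^ ((2 : ℝ) + α) / ((1 + α) * (2 + α)) +
      (x ⟨n - 1, by omega⟩) ^ ((3 : ℝ) + α) / ((2 + α) * (3 + α))) :
    (∀ x : Fin n → ℝ, 0 < x ⟨n - 1, by omega⟩ →
      (hess v x).det = (x ⟨n - 1, by omega⟩) ^ α) ∧
    (∀ x : Fin n → ℝ, x ⟨n - 1, by omega⟩ = 0 →
      v x = (1 / 2) * ∑ i : Fin n, (if i.val ≠ n - 1 then (x i) ^ 2 else 0)) := by
  set z : Fin n := ⟨0, by omega⟩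
  set m : Fin n := ⟨n - 1, by omega⟩
  have hzm : z ≠ m := Fin.ne_of_val_ne (show 0 ≠ n - 1 by omega)
  have hv' : v = warpedQuadratic z m (fun t => (2 * (1 + t))⁻¹) (verticalProfile α) := by
    subst hv
    funext y
    have hcompl : ({i | i.val ≠ 0 ∧ i.val ≠ n - 1} : Finset (Fin n)) = {z, m}ᶜ := by
      ext i
      simp [z, m, Fin.ext_iff]
    rw [warpedQuadratic, verticalProfile, ← sum_filter, hcompl]
    ring
  refine ⟨fun x hx => ?_, fun x hx => ?_⟩
  · rw [hv', det_hess_warpedQuadratic (a' := fun t => -(2 * (1 + t) ^ 2)⁻¹)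
      (G' := fun t => t ^ (1 + α) / (1 + α) + t ^ (2 + α) / (2 + α))
      (eventually_gt_nhds hx |>.mono fun t ht => hasDerivAt_inv_two_mul_one_add (by linarith))
      (eventually_gt_nhds hx |>.mono fun t ht => hasDerivAt_verticalProfile (by linarith) ht) hzm
      (hasDerivAt_neg_inv_two_mul_one_add_sq (by linarith))
      (hasDerivAt_verticalProfile_deriv (by linarith) hx), Real.rpow_add hx, Real.rpow_one]
    field_simp
    ring
  · rw [hv', warpedQuadratic_of_apply_eq_zero hzm (by norm_num) (verticalProfile_zero (by linarith))
      hx, ← sum_filter]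
    congr 2
    ext i
    simp [m, Fin.ext_iff]
end

section
/- Gradient bound from section geometry: Let u ≥ 0 be a convex function on a convex set Ω̄ ⊂ ℝ^n with u(0) = 0, 0 ∈ ∂Ω, and suppose Ω contains the ball B_r(ϱ e_n) for positive constants r, ϱ, and u ≤ 1 on Ω. Then |∇u| ≤ C(r, ϱ) at every point of the open convex hull of {0} and B_{r/2}(ϱ e_n) where u is differentiable. -/
open Set Metric

/-- Subgradient inequality for a convex function at a differentiability point. -/
lemma subgrad_ineq {E : Type*} [NormedAddCommGroup E] [NormedSpace ℝ E]
    {s : Set E} {u : E → ℝ} (hu : ConvexOn ℝ s u) {x y : E}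
    (hx : x ∈ s) (hy : y ∈ s) (hd : DifferentiableAt ℝ u x) :
    fderiv ℝ u x (y - x) ≤ u y - u x := by
  set p := fderiv ℝ u x with hp
  have hline : HasDerivAt (fun t : ℝ => x + t • (y - x)) (y - x) 0 := by
    simpa using ((hasDerivAt_id (0:ℝ)).smul_const (y - x)).const_add x
  have hl : HasFDerivAt u p (x + (0:ℝ) • (y - x)) := by
    rw [show x + (0:ℝ) • (y - x) = x by simp]
    exact hd.hasFDerivAt
  have hg : HasDerivAt (fun t : ℝ => u (x + t • (y - x))) (p (y - x)) 0 :=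
    hl.comp_hasDerivAt 0 hline
  have tends : Filter.Tendsto (slope (fun t : ℝ => u (x + t • (y - x))) 0) (nhdsWithin 0 (Set.Ioi 0))
      (nhds (p (y - x))) :=
    (hasDerivAt_iff_tendsto_slope.mp hg).mono_left
      (nhdsWithin_mono _ (by intro t ht; exact Set.mem_compl_singleton_iff.mpr (ne_of_gt ht)))
  refine le_of_tendsto tends ?_
  filter_upwards [Ioc_mem_nhdsGT_of_mem (Set.mem_Ico.mpr ⟨le_refl (0:ℝ), one_pos⟩)] with t ht
  have hmem := hu.2 hx hy (show (0:ℝ) ≤ 1 - t by linarith [ht.2]) ht.1.le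
    (show (1 - t) + t = 1 by ring)
  have hpt : (1 - t) • x + t • y = x + t • (y - x) := by
    rw [smul_sub, sub_smul, one_smul]; abel
  rw [hpt] at hmem
  rw [slope_def_field]
  simp only [zero_smul, add_zero, sub_zero]
  have htne : t ≠ 0 := ne_of_gt ht.1
  have h2 : ((1 - t) * u x + t * u y - u x) / t = u y - u x := by
    field_simp; ring
  simp only [smul_eq_mul] at hmem
  calc (u (x + t • (y - x)) - u x) / t
      ≤ ((1 - t) * u x + t * u y - u x) / t := div_le_div_of_nonneg_right (by linarith) ht.1.le
    _ = u y - u x := h2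

/-- gradient bound from section geometry.  If `u ≥ 0` is convex on a convex
set `Ω̄` with `u(0) = 0`, `0 ∈ ∂Ω`, `B_r(ϱ eₙ) ⊆ Ω` and `u ≤ 1` on `Ω`, then
`|∇u| ≤ C(r, ϱ)` at every differentiability point of the open convex hull of `{0}` and
`B_{r/2}(ϱ eₙ)`.  The ambient dimension is `n + 1`. -/
theorem stmt17 (n : ℕ) (r ϱ : ℝ) (hr : 0 < r) (hϱ : 0 < ϱ) :
    ∃ C : ℝ,
      ∀ (Ω : Set (EuclideanSpace ℝ (Fin (n + 1))))
        (u : EuclideanSpace ℝ (Fin (n + 1)) → ℝ),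
        Convex ℝ Ω →
        (0 : EuclideanSpace ℝ (Fin (n + 1))) ∈ frontier Ω →
        Metric.ball (ϱ • EuclideanSpace.single (Fin.last n) (1 : ℝ)) r ⊆ Ω →
        ConvexOn ℝ (closure Ω) u →
        (∀ x ∈ closure Ω, 0 ≤ u x) →
        u 0 = 0 →
        (∀ x ∈ Ω, u x ≤ 1) →
        ∀ x ∈ interior (convexHull ℝ
          ({0} ∪ Metric.ball (ϱ • EuclideanSpace.single (Fin.last n) (1 : ℝ)) (r / 2))),
          DifferentiableAt ℝ u x → ‖fderiv ℝ u x‖ ≤ C := by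
  refine ⟨4 / r, ?_⟩
  intro Ω u hΩconv h0f hball hu hupos hu0 hule1 x hx hdx
  set c : EuclideanSpace ℝ (Fin (n + 1)) := ϱ • EuclideanSpace.single (Fin.last n) (1 : ℝ)
    with hc
  set p := fderiv ℝ u x with hp
  have hclconv : Convex ℝ (closure Ω) := hΩconv.closure
  have h0cl : (0 : EuclideanSpace ℝ (Fin (n + 1))) ∈ closure Ω := frontier_subset_closure h0f
  have hKsub : convexHull ℝ ({0} ∪ ball c (r / 2)) ⊆ closure Ω := by
    apply convexHull_min _ hclconv
    rintro z (rfl | hz)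
    · exact h0cl
    · exact subset_closure (hball (ball_subset_ball (by linarith) hz))
  have hxcl : x ∈ closure Ω := hKsub (interior_subset hx)
  have key : ∀ y ∈ closure Ω, p (y - x) ≤ u y - u x := fun y hy => subgrad_ineq hu hxcl hy hdx
  have hux0 : 0 ≤ u x := hupos x hxcl
  have hpx : 0 ≤ p x := by
    have h := key 0 h0cl
    rw [zero_sub, map_neg, hu0] at h
    linarith
  by_cases hx0 : x = 0
  · have hmin : IsLocalMin u x := by
      have hnhds : interior (convexHull ℝ ({0} ∪ ball c (r / 2))) ∈ nhds x :=
        isOpen_interior.mem_nhds hx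
      filter_upwards [hnhds] with y hy
      rw [hx0, hu0]
      exact hupos y (hKsub (interior_subset hy))
    rw [hp, hmin.fderiv_eq_zero, norm_zero]
    positivity
  · obtain ⟨b, hb, t, ht0, ht1, hxtb⟩ :
        ∃ b ∈ closedBall c (r / 2), ∃ t : ℝ, 0 ≤ t ∧ t ≤ 1 ∧ x = t • b := by
      have h1 : x ∈ convexHull ℝ (insert 0 (closedBall c (r / 2))) := by
        apply convexHull_mono _ (interior_subset hx)
        rintro z (rfl | hz)
        · exact mem_insert _ _
        · exact mem_insert_of_mem _ (ball_subset_closedBall hz)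
      rw [convexHull_insert ⟨c, mem_closedBall_self (by positivity)⟩,
        (convex_closedBall c (r / 2)).convexHull_eq] at h1
      rw [mem_convexJoin] at h1
      obtain ⟨z, hz, b, hb, hseg⟩ := h1
      rw [Set.mem_singleton_iff.mp hz, segment_eq_image] at hseg
      obtain ⟨t, ht, hxeq⟩ := hseg
      exact ⟨b, hb, t, ht.1, ht.2, by simpa using hxeq.symm⟩
    have htpos : 0 < t := by
      rcases ht0.lt_or_eq with h | h
      · exact h
      · exact absurd (by rw [hxtb, ← h, zero_smul]) hx0
    have hpb : 0 ≤ p b := by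
      have h := hpx
      rw [hxtb, map_smul, smul_eq_mul] at h
      exact nonneg_of_mul_nonneg_right h htpos
    have hbΩ : b ∈ closure Ω := subset_closure (hball (by
      have := mem_closedBall.mp hb
      rw [mem_ball]
      linarith))
    have hpbc : p (b - c) ≤ ‖p‖ * (r / 2) := by
      calc p (b - c) ≤ ‖p (b - c)‖ := le_abs_self _
        _ ≤ ‖p‖ * ‖b - c‖ := p.le_opNorm _
        _ ≤ ‖p‖ * (r / 2) := by
            apply mul_le_mul_of_nonneg_left _ (norm_nonneg p)
            rw [← dist_eq_norm]
            exact mem_closedBall.mp hb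
    have hbound : ∀ v : EuclideanSpace ℝ (Fin (n + 1)), ‖v‖ = 1 →
        p v ≤ 4 / (3 * r) + (2 / 3) * ‖p‖ := by
      intro v hv
      have hz : c + (3 * r / 4) • v ∈ Ω := by
        apply hball
        rw [mem_ball, dist_eq_norm]
        have : c + (3 * r / 4) • v - c = (3 * r / 4) • v := by abel
        rw [this, norm_smul, hv, Real.norm_eq_abs, abs_of_pos (by positivity)]
        linarith
      have h1 := key _ (subset_closure hz)
      have h2 : u (c + (3 * r / 4) • v) ≤ 1 := hule1 _ hz
      have e1 : p (c + (3 * r / 4) • v - x) = p c + (3 * r / 4) * p v - p x := by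
        rw [map_sub, map_add,
          show p ((3 * r / 4) • v) = (3 * r / 4) * p v from by rw [map_smul, smul_eq_mul]]
      have e2 : p x = t * p b := by rw [hxtb, map_smul, smul_eq_mul]
      have e3 : p c = p b - p (b - c) := by rw [map_sub]; ring
      have h4 : 0 ≤ (1 - t) * p b := mul_nonneg (by linarith) hpb
      have h5 : (3 * r / 4) * p v ≤ 1 + (r / 2) * ‖p‖ := by
        rw [e1, e2, e3] at h1
        nlinarith
      have h6 : (3 * r / 4) * (4 / (3 * r) + (2 / 3) * ‖p‖) = 1 + (r / 2) * ‖p‖ := by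
        field_simp
        ring
      exact le_of_mul_le_mul_left (by linarith) (by positivity : (0:ℝ) < 3 * r / 4)
    have hM0 : 0 ≤ 4 / (3 * r) + (2 / 3) * ‖p‖ := by positivity
    have hnorm : ‖p‖ ≤ 4 / (3 * r) + (2 / 3) * ‖p‖ := by
      apply p.opNorm_le_of_unit_norm hM0
      intro v hv
      rw [Real.norm_eq_abs, abs_le]
      constructor
      · have h := hbound (-v) (by rw [norm_neg, hv])
        rw [map_neg] at h
        linarith
      · exact hbound v hv
    have h7 : 4 / (3 * r) = (1 / 3) * (4 / r) := by
      field_simp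
    linarith
end
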